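/- arXiv:2306.08942 — 2 statements merged into one kernel-verified Lean document; each statement's English description precedes it below -/
import Mathlib

section
/- Let B, B̂ ∈ ℝ^{k×d} with ‖B − B̂‖ ≤ ‖B‖, let V ∈ ℝ^{d×r} satisfy VᵀV = I_r and B̂ V Vᵀ = B̂, and let M ∈ ℝ^{d×d} be any matrix. Then ‖B V Vᵀ M V Vᵀ Bᵀ − B M Bᵀ‖ ≤ 8 · ‖B − B̂‖ · ‖B‖ · ‖M‖. -/
/-!
`P = V Vᵀ` is a contraction fixing `B̂`, so `BP - B = (B - B̂)P - (B - B̂)` has norm at most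
`2 ‖B - B̂‖`, whence `‖BP‖ ≤ 3 ‖B‖`. Writing `X = BP`, the quantity to bound is
`X M Xᵀ - B M Bᵀ = (X - B) M Xᵀ + B M (X - B)ᵀ`, of norm at most `2 ‖B - B̂‖ ‖M‖ (3 ‖B‖ + ‖B‖)`.
-/

open Matrix

/-- ℓ² operator norm of a real matrix (largest singular value). -/
noncomputable def opNorm {m n : Type*} [Fintype m] [Fintype n] [DecidableEq n]
    (M : Matrix m n ℝ) : ℝ :=
  ‖LinearMap.toContinuousLinearMap (Matrix.toEuclideanLin M)‖

open scoped Matrix.Norms.L2Operator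

lemma opNorm_eq_l2_opNorm {m n : Type*} [Fintype m] [Fintype n] [DecidableEq n]
    (A : Matrix m n ℝ) : opNorm A = ‖A‖ := rfl

namespace Matrix

variable {𝕜 : Type*} [RCLike 𝕜] {m n : Type*} [Fintype m] [Fintype n] [DecidableEq n]

lemma l2_opNorm_one_le : ‖(1 : Matrix n n 𝕜)‖ ≤ 1 := by
  rw [cstar_norm_def, map_one]
  exact ContinuousLinearMap.norm_id_le

lemma l2_opNorm_le_one_of_conjTranspose_mul_self_eq_one {V : Matrix m n 𝕜} (hV : Vᴴ * V = 1) :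
    ‖V‖ ≤ 1 := by
  have hsq : ‖V‖ * ‖V‖ ≤ 1 := by
    rw [← l2_opNorm_conjTranspose_mul_self, hV]
    exact l2_opNorm_one_le
  nlinarith [norm_nonneg V]

lemma l2_opNorm_mul_conjTranspose_le_one [DecidableEq m] {V : Matrix m n 𝕜} (hV : Vᴴ * V = 1) :
    ‖V * Vᴴ‖ ≤ 1 := by
  have hV1 := l2_opNorm_le_one_of_conjTranspose_mul_self_eq_one hV
  calc ‖V * Vᴴ‖ ≤ ‖V‖ * ‖Vᴴ‖ := l2_opNorm_mul V Vᴴ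
    _ = ‖V‖ * ‖V‖ := by rw [l2_opNorm_conjTranspose]
    _ ≤ 1 := by nlinarith [norm_nonneg V]

lemma l2_opNorm_mul_sub_le_two_mul {B Bhat : Matrix m n 𝕜} {P : Matrix n n 𝕜} (hP : ‖P‖ ≤ 1)
    (hBhat : Bhat * P = Bhat) : ‖B * P - B‖ ≤ 2 * ‖B - Bhat‖ := by
  have hdiff : B * P - B = (B - Bhat) * P - (B - Bhat) := by
    rw [Matrix.sub_mul, hBhat]
    abel
  have hEP : ‖(B - Bhat) * P‖ ≤ ‖B - Bhat‖ :=
    (l2_opNorm_mul _ _).trans (mul_le_of_le_one_right (norm_nonneg _) hP)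
  calc ‖B * P - B‖ ≤ ‖(B - Bhat) * P‖ + ‖B - Bhat‖ := hdiff ▸ norm_sub_le _ _
    _ ≤ 2 * ‖B - Bhat‖ := by linarith

lemma l2_opNorm_mul_mul_conjTranspose_sub_le [DecidableEq m] (X B : Matrix m n 𝕜)
    (M : Matrix n n 𝕜) :
    ‖X * M * Xᴴ - B * M * Bᴴ‖ ≤ ‖X - B‖ * ‖M‖ * (‖X‖ + ‖B‖) := by
  have hsplit : X * M * Xᴴ - B * M * Bᴴ = (X - B) * M * Xᴴ + B * M * (X - B)ᴴ := by
    simp only [Matrix.sub_mul, Matrix.mul_sub, conjTranspose_sub]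
    abel
  have hnorm₃ (A C : Matrix m n 𝕜) : ‖A * M * Cᴴ‖ ≤ ‖A‖ * ‖M‖ * ‖C‖ := by
    calc ‖A * M * Cᴴ‖ ≤ ‖A * M‖ * ‖Cᴴ‖ := l2_opNorm_mul _ _
      _ ≤ ‖A‖ * ‖M‖ * ‖C‖ := by
        rw [l2_opNorm_conjTranspose]
        gcongr
        exact l2_opNorm_mul _ _
  calc ‖X * M * Xᴴ - B * M * Bᴴ‖
      ≤ ‖(X - B) * M * Xᴴ‖ + ‖B * M * (X - B)ᴴ‖ := hsplit ▸ norm_add_le _ _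
    _ ≤ ‖X - B‖ * ‖M‖ * ‖X‖ + ‖B‖ * ‖M‖ * ‖X - B‖ := add_le_add (hnorm₃ _ _) (hnorm₃ _ _)
    _ = ‖X - B‖ * ‖M‖ * (‖X‖ + ‖B‖) := by ring

end Matrix

/-- Perturbation bound: if `‖B − B̂‖ ≤ ‖B‖`, `VᵀV = I` and `B̂ V Vᵀ = B̂`, then for any `M`,
`‖B V Vᵀ M V Vᵀ Bᵀ − B M Bᵀ‖ ≤ 8 ‖B − B̂‖ ‖B‖ ‖M‖`. -/
theorem projected_representation_perturbation {k d r : ℕ}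
    (B Bhat : Matrix (Fin k) (Fin d) ℝ) (V : Matrix (Fin d) (Fin r) ℝ)
    (hclose : opNorm (B - Bhat) ≤ opNorm B)
    (hV : Vᵀ * V = 1) (hBhatV : Bhat * (V * Vᵀ) = Bhat)
    (M : Matrix (Fin d) (Fin d) ℝ) :
    opNorm (B * V * Vᵀ * M * V * Vᵀ * Bᵀ - B * M * Bᵀ) ≤
      8 * opNorm (B - Bhat) * opNorm B * opNorm M := by
  simp only [opNorm_eq_l2_opNorm] at hclose ⊢
  have hP : ‖V * Vᵀ‖ ≤ 1 :=
    l2_opNorm_mul_conjTranspose_le_one (by rwa [conjTranspose_eq_transpose_of_trivial])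
  have hdiff := l2_opNorm_mul_sub_le_two_mul (B := B) hP hBhatV
  have hBP : ‖B * (V * Vᵀ)‖ ≤ 3 * ‖B‖ := by
    linarith [norm_le_insert' (B * (V * Vᵀ)) B]
  have hsandwich := l2_opNorm_mul_mul_conjTranspose_sub_le (B * (V * Vᵀ)) B M
  simp only [conjTranspose_eq_transpose_of_trivial, transpose_mul, transpose_transpose,
    Matrix.mul_assoc] at hsandwich
  simp only [Matrix.mul_assoc]
  calc _ ≤ ‖B * (V * Vᵀ) - B‖ * ‖M‖ * (‖B * (V * Vᵀ)‖ + ‖B‖) := hsandwich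
    _ ≤ 2 * ‖B - Bhat‖ * ‖M‖ * (3 * ‖B‖ + ‖B‖) := by gcongr
    _ = 8 * ‖B - Bhat‖ * ‖B‖ * ‖M‖ := by ring
end

section
/- Let A ∈ ℝ^{k×k} be a matrix with operator norm ‖A‖ ≤ 1, and suppose Tr(A) ≥ k(1 − s²) for some s ∈ [0,1]. Then ‖I_k − A‖_F² ≤ 2 k s², and in particular the operator norm satisfies ‖I_k − A‖ ≤ √(2k) · s. -/
open Matrix

/-- Frobenius norm of a real matrix. -/
noncomputable def frobNorm {m n : Type*} [Fintype m] [Fintype n]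
    (M : Matrix m n ℝ) : ℝ :=
  Real.sqrt (∑ i, ∑ j, M i j ^ 2)

lemma euclid_norm_sq {m : Type*} [Fintype m] (x : EuclideanSpace ℝ m) :
    ‖x‖ ^ 2 = ∑ i, x i ^ 2 := by
  rw [EuclideanSpace.norm_eq, Real.sq_sqrt (by positivity)]
  simp [sq_abs]

lemma toEuclideanLin_apply' {m n : Type*} [Fintype m] [Fintype n] [DecidableEq n]
    (M : Matrix m n ℝ) (x : EuclideanSpace ℝ n) (i : m) :
    (Matrix.toEuclideanLin M x) i = ∑ j, M i j * x j := by
  rfl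

lemma opNorm_le_frobNorm {m n : Type*} [Fintype m] [Fintype n] [DecidableEq n]
    (M : Matrix m n ℝ) : opNorm M ≤ frobNorm M := by
  apply ContinuousLinearMap.opNorm_le_bound _ (Real.sqrt_nonneg _)
  intro x
  rw [LinearMap.coe_toContinuousLinearMap']
  have h1 : ‖Matrix.toEuclideanLin M x‖ ^ 2 ≤ (∑ i, ∑ j, M i j ^ 2) * ‖x‖ ^ 2 := by
    rw [euclid_norm_sq, euclid_norm_sq, Finset.sum_mul]
    apply Finset.sum_le_sum
    intro i _
    rw [toEuclideanLin_apply']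
    exact Finset.sum_mul_sq_le_sq_mul_sq _ _ _
  have h2 : ‖Matrix.toEuclideanLin M x‖ ≤
      Real.sqrt ((∑ i, ∑ j, M i j ^ 2) * ‖x‖ ^ 2) := by
    rw [← Real.sqrt_sq (norm_nonneg _)]
    exact Real.sqrt_le_sqrt h1
  calc ‖Matrix.toEuclideanLin M x‖ ≤ Real.sqrt ((∑ i, ∑ j, M i j ^ 2) * ‖x‖ ^ 2) := h2
    _ = frobNorm M * ‖x‖ := by
        rw [Real.sqrt_mul (by positivity), Real.sqrt_sq (norm_nonneg x)]; rfl

lemma col_sq_le_opNorm_sq {k : ℕ} (A : Matrix (Fin k) (Fin k) ℝ) (j : Fin k) :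
    ∑ i, A i j ^ 2 ≤ opNorm A ^ 2 := by
  set v : EuclideanSpace ℝ (Fin k) := EuclideanSpace.single j 1 with hv
  have hnv : ‖v‖ = 1 := by simp [hv]
  have h1 : ‖Matrix.toEuclideanLin A v‖ ≤ opNorm A := by
    have := (LinearMap.toContinuousLinearMap (Matrix.toEuclideanLin A)).le_opNorm v
    rwa [LinearMap.coe_toContinuousLinearMap', hnv, mul_one] at this
  have h2 : ∑ i, A i j ^ 2 = ‖Matrix.toEuclideanLin A v‖ ^ 2 := by
    rw [euclid_norm_sq]
    congr 1
    ext i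
    rw [toEuclideanLin_apply']
    simp [hv, EuclideanSpace.single_apply]
  rw [h2]
  exact pow_le_pow_left₀ (norm_nonneg _) h1 2

/-- If `‖A‖ ≤ 1` and `Tr(A) ≥ k (1 − s²)` with `s ∈ [0,1]`, then
`‖I − A‖_F² ≤ 2 k s²`, and in particular `‖I − A‖ ≤ √(2k) · s`. -/
theorem identity_minus_A_bound {k : ℕ} (A : Matrix (Fin k) (Fin k) ℝ)
    (hA : opNorm A ≤ 1) (s : ℝ) (hs0 : 0 ≤ s) (hs1 : s ≤ 1)
    (htr : (k : ℝ) * (1 - s ^ 2) ≤ Matrix.trace A) :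
    frobNorm (1 - A) ^ 2 ≤ 2 * (k : ℝ) * s ^ 2 ∧
    opNorm (1 - A) ≤ Real.sqrt (2 * (k : ℝ)) * s := by
  have hAF : ∑ i, ∑ j, A i j ^ 2 ≤ (k : ℝ) := by
    rw [Finset.sum_comm]
    calc ∑ j, ∑ i, A i j ^ 2 ≤ ∑ _j : Fin k, (1 : ℝ) := by
          apply Finset.sum_le_sum
          intro j _
          refine (col_sq_le_opNorm_sq A j).trans ?_
          have h0 : (0:ℝ) ≤ opNorm A := norm_nonneg _
          nlinarith
      _ = (k : ℝ) := by simp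
  have hexp : frobNorm (1 - A) ^ 2 = (k : ℝ) - 2 * Matrix.trace A + ∑ i, ∑ j, A i j ^ 2 := by
    rw [frobNorm, Real.sq_sqrt (by positivity)]
    have : ∀ i j : Fin k, (1 - A) i j ^ 2 =
        ((if i = j then (1:ℝ) else 0) - 2 * (if i = j then (1:ℝ) else 0) * A i j) + A i j ^ 2 := by
      intro i j
      by_cases h : i = j <;> simp [Matrix.sub_apply, Matrix.one_apply, h] <;> ring
    simp_rw [this, Finset.sum_add_distrib, Finset.sum_sub_distrib]
    congr 2
    · simp
    · rw [Matrix.trace, Finset.mul_sum]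
      congr 1
      ext i
      simp [Matrix.diag, Finset.mul_sum, Finset.sum_ite_eq', mul_comm]
  have hF : frobNorm (1 - A) ^ 2 ≤ 2 * (k : ℝ) * s ^ 2 := by
    rw [hexp]
    nlinarith
  refine ⟨hF, ?_⟩
  calc opNorm (1 - A) ≤ frobNorm (1 - A) := opNorm_le_frobNorm _
    _ ≤ Real.sqrt (2 * (k : ℝ)) * s := by
        rw [frobNorm] at hF ⊢
        have h1 : Real.sqrt (∑ i, ∑ j, (1 - A) i j ^ 2) ≤ Real.sqrt (2 * (k:ℝ) * s ^ 2) := by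
          apply Real.sqrt_le_sqrt
          nlinarith [Real.sq_sqrt (show (0:ℝ) ≤ ∑ i, ∑ j, (1 - A) i j ^ 2 by positivity),
            Real.sqrt_nonneg (∑ i, ∑ j, (1 - A) i j ^ 2)]
        calc Real.sqrt (∑ i, ∑ j, (1 - A) i j ^ 2) ≤ Real.sqrt (2 * (k:ℝ) * s ^ 2) := h1
          _ = Real.sqrt (2 * (k:ℝ)) * s := by
              rw [Real.sqrt_mul (by positivity), Real.sqrt_sq hs0]
end
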